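/- arXiv:1308.0909 — 6 statements merged into one kernel-verified Lean document; each statement's English description precedes it below -/
import Mathlib

section
/- Let k be a field, let a ∈ k be an element that is not a square in k, and let P ∈ k[X] be a polynomial of degree 1. Then the fraction field of k[X,Y,Z]/(Z² − aY² − P(X)) is k-rational. -/
/-!
Write `P = cX + d` with `c ≠ 0`. Up to the unit `-c`, the defining relation reads
`X = c⁻¹(Z² − aY² − d)`, so `X` can be eliminated: the ring `k[X,Y,Z]/(Z² − aY² − P(X))` is
already isomorphic to the polynomial ring `k[Y,Z]`, and hence so are the fraction fields.
-/

/-- The ideal of `k[X,Y,Z]` generated by `Z² − aY² − P(X)`, where the variables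
`X, Y, Z` of `MvPolynomial (Fin 3) k` are indexed by `0, 1, 2` respectively. -/
noncomputable abbrev chateletIdeal (k : Type) [Field k] (a : k) (P : Polynomial k) :
    Ideal (MvPolynomial (Fin 3) k) :=
  Ideal.span {MvPolynomial.X 2 ^ 2 - MvPolynomial.C a * MvPolynomial.X 1 ^ 2
      - Polynomial.aeval (MvPolynomial.X 0) P}

/-- The ring `k[X,Y,Z]/(Z² − aY² − P(X))`. -/
abbrev chateletRing (k : Type) [Field k] (a : k) (P : Polynomial k) : Type :=
  MvPolynomial (Fin 3) k ⧸ chateletIdeal k a P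

/-- A `k`-algebra `K` is `k`-rational if it is `k`-isomorphic to the rational function
field in two variables over `k`. -/
def IsKRational (k : Type) [Field k] (K : Type) [CommRing K] [Algebra k K] : Prop :=
  Nonempty (K ≃ₐ[k] FractionRing (MvPolynomial (Fin 2) k))

namespace MvPolynomial

theorem finSuccEquiv_rename_succ {R : Type*} [CommSemiring R] {n : ℕ}
    (g : MvPolynomial (Fin n) R) :
    finSuccEquiv R n (rename Fin.succ g) = Polynomial.C g := by
  suffices ((finSuccEquiv R n).toAlgHom.comp (rename Fin.succ)) = Polynomial.CAlgHom from
    DFunLike.congr_fun this g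
  exact algHom_ext fun i ↦ by simp [finSuccEquiv_X_succ]

noncomputable def quotientSpanXZeroSubAlgEquiv {R : Type*} [CommRing R] {n : ℕ}
    (g : MvPolynomial (Fin n) R) :
    (MvPolynomial (Fin (n + 1)) R ⧸ Ideal.span {X 0 - rename Fin.succ g}) ≃ₐ[R]
      MvPolynomial (Fin n) R :=
  (Ideal.quotientEquivAlg _ (Ideal.span {Polynomial.X - Polynomial.C g}) (finSuccEquiv R n) <| by
      simp [Ideal.map_span, finSuccEquiv_X_zero, finSuccEquiv_rename_succ]).trans
    ((Polynomial.quotientSpanXSubCAlgEquiv g).restrictScalars R)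

end MvPolynomial

open MvPolynomial

section Chatelet

variable {k : Type} [Field k]

theorem chateletIdeal_C_mul_X_add_C (a : k) {c : k} (hc : c ≠ 0) (d : k) :
    chateletIdeal k a (Polynomial.C c * Polynomial.X + Polynomial.C d) =
      Ideal.span {X 0 - rename Fin.succ (C c⁻¹ * (X 1 ^ 2 - C a * X 0 ^ 2 - C d))} := by
  have hcc : (C c⁻¹ : MvPolynomial (Fin 3) k) * C c = 1 := by
    rw [← C_mul, inv_mul_cancel₀ hc, C_1]
  have hgen : X 2 ^ 2 - C a * X 1 ^ 2 - Polynomial.aeval (X 0 : MvPolynomial (Fin 3) k)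
      (Polynomial.C c * Polynomial.X + Polynomial.C d) =
      C (-c) * (X 0 - rename Fin.succ (C c⁻¹ * (X 1 ^ 2 - C a * X 0 ^ 2 - C d))) := by
    simp only [map_add, map_mul, map_sub, map_pow, Polynomial.aeval_C, Polynomial.aeval_X,
      algebraMap_eq, algHom_C, rename_X, C_neg, neg_mul, Fin.succ_zero_eq_one, Fin.succ_one_eq_two]
    linear_combination (C d + C a * X 1 ^ 2 - X 2 ^ 2 : MvPolynomial (Fin 3) k) * hcc
  rw [chateletIdeal, hgen, Ideal.span_singleton_mul_left_unit
    ((neg_ne_zero.mpr hc).isUnit.map (C : k →+* MvPolynomial (Fin 3) k))]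

noncomputable def chateletRingAlgEquiv (a : k) {c : k} (hc : c ≠ 0) (d : k) :
    chateletRing k a (Polynomial.C c * Polynomial.X + Polynomial.C d) ≃ₐ[k]
      MvPolynomial (Fin 2) k :=
  (Ideal.quotientEquivAlgOfEq k (chateletIdeal_C_mul_X_add_C a hc d)).trans
    (quotientSpanXZeroSubAlgEquiv _)

theorem isKRational_fractionRing {A : Type} [CommRing A] [Algebra k A]
    (e : A ≃ₐ[k] MvPolynomial (Fin 2) k) : IsKRational k (FractionRing A) :=
  ⟨IsFractionRing.algEquivOfAlgEquiv e⟩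

end Chatelet

theorem chatelet_rational_of_degree_one_general (k : Type) [Field k]
    (a : k)
    (P : Polynomial k) (hdeg : P.degree = 1) :
    IsKRational k (FractionRing (chateletRing k a P)) := by
  obtain ⟨c, d, hc, rfl⟩ : ∃ c d, c ≠ 0 ∧ P = Polynomial.C c * Polynomial.X + Polynomial.C d :=
    ⟨_, _, Polynomial.coeff_ne_zero_of_eq_degree hdeg,
      Polynomial.eq_X_add_C_of_degree_le_one hdeg.le⟩
  exact isKRational_fractionRing (chateletRingAlgEquiv a hc d)

/-- If `a` is not a square in `k` and `deg P = 1`, then the fraction field of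
`k[X,Y,Z]/(Z² − aY² − P(X))` is `k`-rational. -/
theorem chatelet_rational_of_degree_one (k : Type) [Field k]
    (a : k) (ha : ¬ IsSquare a)
    (P : Polynomial k) (hdeg : P.degree = 1) :
    IsKRational k (FractionRing (chateletRing k a P)) :=
  chatelet_rational_of_degree_one_general k a P hdeg
end

section
/- Let k be a perfect field with algebraic closure k̄, and let K and K′ be field extensions of k. Then there exists a k-algebra isomorphism K ≅ K′ if and only if there exists a k̄-algebra isomorphism T : k̄ ⊗_k K → k̄ ⊗_k K′ which commutes with the Galois action, i.e., for every σ ∈ Aut(k̄/k) one has T ∘ (σ ⊗ id_K) = (σ ⊗ id_{K′}) ∘ T. -/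
/-!
Since `k` is perfect, `k̄/k` is Galois, so the Galois-invariant elements of `k̄` are exactly `k`.
Expanding in a `k̄`-basis `1 ⊗ bᵢ` coming from a `k`-basis of `K` shows that the invariants of
`k̄ ⊗ₖ K` are exactly `1 ⊗ K ≅ K`. An equivariant isomorphism `T` therefore restricts to a
`k`-algebra isomorphism between the invariants `K` and `K'`; conversely `K ≃ K'` base-changes
to an equivariant `k̄ ⊗ₖ K ≃ k̄ ⊗ₖ K'`.
-/

open scoped TensorProduct

namespace Algebra.TensorProduct

theorem basis_repr_rTensor {R A M ι : Type*} [CommSemiring R] [CommSemiring A] [Algebra R A]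
    [AddCommMonoid M] [Module R M] (b : Module.Basis ι R M) (σ : A ≃ₐ[R] A) (x : A ⊗[R] M) :
    (basis A b).repr (σ.toLinearMap.rTensor M x) =
      ((basis A b).repr x).mapRange σ (map_zero σ) := by
  induction x using TensorProduct.induction_on with
  | zero => simp
  | tmul c v =>
    ext i
    simp
  | add x y hx hy =>
    ext i
    simp [hx, hy]

variable {k L : Type*} [Field k] [Field L] [Algebra k L]

section Module

variable {V : Type*} [AddCommGroup V] [Module k V]

theorem exists_eq_one_tmul_of_forall_rTensor_eq [IsGalois k L] (x : L ⊗[k] V)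
    (hx : ∀ σ : Gal(L/k), σ.toLinearMap.rTensor V x = x) : ∃ v : V, x = 1 ⊗ₜ v := by
  classical
  let b := Module.Basis.ofVectorSpace k V
  have hfixed (i) (σ : Gal(L/k)) : σ ((basis L b).repr x i) = (basis L b).repr x i := by
    conv_rhs => rw [← hx σ, basis_repr_rTensor]
    rfl
  choose a ha using fun i ↦ (InfiniteGalois.mem_range_algebraMap_iff_fixed _).2 (hfixed i)
  refine ⟨∑ i ∈ ((basis L b).repr x).support, a i • b i, ?_⟩
  conv_lhs => rw [← (basis L b).linearCombination_repr x, Finsupp.linearCombination_apply]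
  rw [TensorProduct.tmul_sum]
  refine Finset.sum_congr rfl fun i _ ↦ ?_
  rw [← ha]
  dsimp only
  rw [basis_repr_symm_apply', Algebra.algebraMap_eq_smul_one, TensorProduct.smul_tmul]

end Module

section Algebra

variable {A B : Type*} [Ring A] [Algebra k A] [Ring B] [Algebra k B]

theorem mem_range_includeRight_iff [IsGalois k L] (x : L ⊗[k] A) :
    x ∈ (includeRight : A →ₐ[k] L ⊗[k] A).range ↔
      ∀ σ : Gal(L/k), map σ.toAlgHom (AlgHom.id k A) x = x := by
  constructor
  · rintro ⟨a, rfl⟩ σ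
    simp
  · intro hx
    obtain ⟨a, rfl⟩ := exists_eq_one_tmul_of_forall_rTensor_eq x hx
    exact ⟨a, rfl⟩

theorem map_range_includeRight_of_commute_map [IsGalois k L] (T : L ⊗[k] A ≃ₐ[L] L ⊗[k] B)
    (hT : ∀ (σ : Gal(L/k)) (x : L ⊗[k] A),
      T (map σ.toAlgHom (AlgHom.id k A) x) = map σ.toAlgHom (AlgHom.id k B) (T x)) :
    (includeRight : A →ₐ[k] L ⊗[k] A).range.map (T.restrictScalars k : L ⊗[k] A →ₐ[k] L ⊗[k] B) =
      (includeRight : B →ₐ[k] L ⊗[k] B).range := by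
  have fixed_iff (x : L ⊗[k] A) (σ : Gal(L/k)) :
      map σ.toAlgHom (AlgHom.id k B) (T x) = T x ↔ map σ.toAlgHom (AlgHom.id k A) x = x := by
    rw [← hT, T.injective.eq_iff]
  ext y
  obtain ⟨x, rfl⟩ := T.surjective y
  simp only [Subalgebra.mem_map, mem_range_includeRight_iff, fixed_iff]
  exact ⟨fun ⟨x', hx', hx'x⟩ ↦ T.injective hx'x ▸ hx', fun hx ↦ ⟨x, hx, rfl⟩⟩

theorem congr_refl_map_comm (f : A ≃ₐ[k] B) (σ : Gal(L/k)) (x : L ⊗[k] A) :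
    congr (AlgEquiv.refl : L ≃ₐ[L] L) f (map σ.toAlgHom (AlgHom.id k A) x) =
      map σ.toAlgHom (AlgHom.id k B) (congr (AlgEquiv.refl : L ≃ₐ[L] L) f x) := by
  induction x using TensorProduct.induction_on with
  | zero => simp only [map_zero]
  | tmul c a => rfl
  | add x y hx hy => simp only [map_add, hx, hy]

end Algebra

end Algebra.TensorProduct

open Algebra.TensorProduct in
/-- Two field extensions `K, K′` of a perfect field `k` are `k`-isomorphic iff there is a
`k̄`-algebra isomorphism `k̄ ⊗ₖ K ≃ k̄ ⊗ₖ K′` commuting with the Galois action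
`σ ↦ σ ⊗ id`. -/
theorem isomorph_iff_equivariant_isomorph_of_tensor_algebraicClosure
    (k : Type) [Field k] [PerfectField k]
    (K K' : Type) [Field K] [Algebra k K] [Field K'] [Algebra k K'] :
    Nonempty (K ≃ₐ[k] K') ↔
      ∃ T : (AlgebraicClosure k ⊗[k] K) ≃ₐ[AlgebraicClosure k]
          (AlgebraicClosure k ⊗[k] K'),
        ∀ (σ : AlgebraicClosure k ≃ₐ[k] AlgebraicClosure k)
          (x : AlgebraicClosure k ⊗[k] K),
          T (Algebra.TensorProduct.map σ.toAlgHom (AlgHom.id k K) x) =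
            Algebra.TensorProduct.map σ.toAlgHom (AlgHom.id k K') (T x) := by
  constructor
  · rintro ⟨f⟩
    exact ⟨congr AlgEquiv.refl f, congr_refl_map_comm f⟩
  · rintro ⟨T, hT⟩
    have hk := (algebraMap k (AlgebraicClosure k)).injective
    exact ⟨(AlgEquiv.ofInjective _ (includeRight_injective hk)).trans <|
      ((T.restrictScalars k).subalgebraMap _).trans <|
      (Subalgebra.equivOfEq _ _ (map_range_includeRight_of_commute_map T hT)).trans
      (AlgEquiv.ofInjective _ (includeRight_injective hk)).symm⟩
end

section
/- Let k be a perfect field with algebraic closure k̄, and let K be a field extension of k. Then the set of elements t ∈ k̄ ⊗_k K satisfying (σ ⊗ id_K)(t) = t for every σ ∈ Aut(k̄/k) is exactly the image of K under the canonical map x ↦ 1 ⊗ x. (The fixed subring of k̄ ⊗_k K under the Galois action is K.) -/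
open scoped TensorProduct

/-!
Expand `t` in a `k`-basis `(vᵢ)` of `K` as `t = ∑ cᵢ ⊗ vᵢ` with `cᵢ ∈ k̄`. Since `σ ⊗ id` acts on
these coordinates by `cᵢ ↦ σ cᵢ`, `t` is fixed iff every `cᵢ` is fixed by `Aut(k̄/k)`. As `k` is
perfect, `k̄/k` is Galois, so the fixed `cᵢ` lie in `k` and `t = 1 ⊗ ∑ cᵢ vᵢ`.
-/

namespace TensorProduct

variable {R M M' N κ : Type*} [CommRing R] [AddCommGroup M] [Module R M]
  [AddCommGroup M'] [Module R M'] [AddCommGroup N] [Module R N] [DecidableEq κ]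
  (𝒞 : Module.Basis κ R N)

theorem equivFinsuppOfBasisRight_map_id (f : M →ₗ[R] M') (x : M ⊗[R] N) :
    equivFinsuppOfBasisRight 𝒞 (map f LinearMap.id x) =
      (equivFinsuppOfBasisRight 𝒞 x).mapRange f f.map_zero := by
  induction x with
  | zero => simp
  | tmul m n => ext i; simp
  | add x y hx hy => simp [hx, hy, Finsupp.mapRange_add]

theorem map_id_apply_eq_self_iff (f : M →ₗ[R] M) (x : M ⊗[R] N) :
    map f LinearMap.id x = x ↔
      ∀ i, f (equivFinsuppOfBasisRight 𝒞 x i) = equivFinsuppOfBasisRight 𝒞 x i := by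
  rw [← (equivFinsuppOfBasisRight 𝒞).injective.eq_iff, equivFinsuppOfBasisRight_map_id,
    Finsupp.ext_iff]
  simp only [Finsupp.mapRange_apply]

theorem mem_range_mk_one_of_forall_mem_range_algebraMap {A : Type*} [Ring A] [Algebra R A]
    (x : A ⊗[R] N) (h : ∀ i, equivFinsuppOfBasisRight 𝒞 x i ∈ Set.range (algebraMap R A)) :
    x ∈ Set.range (mk R A N 1) := by
  choose d hd using h
  set c := equivFinsuppOfBasisRight 𝒞 x
  refine ⟨∑ i ∈ c.support, d i • 𝒞 i, ?_⟩
  calc mk R A N 1 (∑ i ∈ c.support, d i • 𝒞 i)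
      = ∑ i ∈ c.support, c i ⊗ₜ 𝒞 i := by
        simp only [map_sum, mk_apply, ← hd, Algebra.algebraMap_eq_smul_one, smul_tmul]
    _ = x := by
        rw [← (equivFinsuppOfBasisRight 𝒞).symm_apply_apply x, equivFinsuppOfBasisRight_symm_apply]
        rfl

theorem forall_map_algEquiv_id_apply_eq_iff_mem_range_mk_one
    {k L V : Type*} [Field k] [Field L] [Algebra k L] [IsGalois k L] [AddCommGroup V] [Module k V]
    (t : L ⊗[k] V) :
    (∀ σ : L ≃ₐ[k] L, map σ.toLinearMap LinearMap.id t = t) ↔ t ∈ Set.range (mk k L V 1) := by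
  classical
  let 𝒞 := Module.Basis.ofVectorSpace k V
  constructor
  · intro h
    refine mem_range_mk_one_of_forall_mem_range_algebraMap 𝒞 t fun i ↦ ?_
    exact (InfiniteGalois.mem_range_algebraMap_iff_fixed _).2
      fun σ ↦ (map_id_apply_eq_self_iff 𝒞 σ.toLinearMap t).1 (h σ) i
  · rintro ⟨v, rfl⟩ σ
    simp

end TensorProduct

/-- For a field extension `K` of a perfect field `k`, the fixed subring of
`k̄ ⊗ₖ K` under the Galois action `σ ↦ σ ⊗ id` is exactly the image of `K`
under `x ↦ 1 ⊗ x`. -/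
theorem fixedPoints_tensor_algebraicClosure
    (k : Type) [Field k] [PerfectField k]
    (K : Type) [Field K] [Algebra k K] (t : AlgebraicClosure k ⊗[k] K) :
    (∀ σ : AlgebraicClosure k ≃ₐ[k] AlgebraicClosure k,
        Algebra.TensorProduct.map σ.toAlgHom (AlgHom.id k K) t = t) ↔
      t ∈ Set.range (Algebra.TensorProduct.includeRight :
        K →ₐ[k] AlgebraicClosure k ⊗[k] K) :=
  -- `Algebra.TensorProduct.map` and `includeRight` are definitionally `TensorProduct.map` and `mk _ _ _ 1`
  TensorProduct.forall_map_algEquiv_id_apply_eq_iff_mem_range_mk_one t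
end

section
/- Let G be a finite group, N ≤ G a subgroup of index 2, and I a finite G-set of odd cardinality r with r′ orbits, such that N acts transitively on each G-orbit of I. Let M be the G-lattice with ℤ-basis {e_i : i ∈ I} ∪ {f} and G-action given by: for σ ∈ N, σ·e_i = e_{σ·i} and σ·f = f; for σ ∈ G∖N, σ·e_i = −e_{σ·i} and σ·f = f − Σ_{i∈I} e_i. Let Z = {x ∈ M : Σ_{σ∈G} σ·x = 0} and let B be the ℤ-submodule of M generated by {σ·x − x : σ ∈ G, x ∈ M}. Then the quotient Z/B is isomorphic as an abelian group to (ℤ/2ℤ)^{r′−1}. -/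
/-!
Every `j ∈ I` is fixed by some `τ ∉ N`: if `ν ∈ N` moves `j` to `τ⁻¹ j`, take `τν`. The
substitution `σ ↦ τσ` then flips the sign of every term of `(∑_σ σ x)_j` when `x` has no
`f`-component, so the norm kernel is `Z = ⊕ ℤ e_i`.

On `Z`, reduce the orbit sums mod 2: `T u = (∑_{i ∈ O} u_i mod 2)_O`. Then `T` maps `B` into the
line spanned by `χ = T (∑ e_i) = (|O| mod 2)_O`, as `T ((σ - 1)(v + c f))` is `0` for `σ ∈ N` and
`-c χ` for `σ ∉ N`. Conversely `B` contains `e_i - e_j` for `i, j` in one orbit, `2 e_i` and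
`∑ e_i = (τ - 1)(-f)` for `τ ∉ N`, which generate `T⁻¹(𝔽₂ χ)`. Hence `Z/B ≅ 𝔽₂^{r'}/𝔽₂ χ`, and
`χ ≠ 0` because `∑_O χ_O = r` is odd.
-/

open MulAction Finset Representation

section OrbitParity

variable (G : Type*) [Group G] (I : Type*) [Fintype I] [MulAction G I]

open Classical in
noncomputable def orbitParity : (I → ℤ) →ₗ[ℤ] (orbitRel.Quotient G I → ZMod 2) where
  toFun u O := ∑ i with (⟦i⟧ : orbitRel.Quotient G I) = O, (u i : ZMod 2)
  map_add' u v := by ext; simp [sum_add_distrib]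
  map_smul' n u := by ext; simp [mul_sum]

variable {G I}

open Classical in
theorem orbitParity_apply (u : I → ℤ) (O : orbitRel.Quotient G I) :
    orbitParity G I u O = ∑ i with (⟦i⟧ : orbitRel.Quotient G I) = O, (u i : ZMod 2) := rfl

theorem orbitParity_comp_smul (σ : G) (u : I → ℤ) :
    orbitParity G I (fun j => u (σ⁻¹ • j)) = orbitParity G I u := by
  ext O
  simp only [orbitParity_apply]
  exact sum_equiv (MulAction.toPerm σ⁻¹) (by simp) (by simp)

theorem sum_orbitParity [Fintype (orbitRel.Quotient G I)] (u : I → ℤ) :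
    ∑ O, orbitParity G I u O = ∑ i, (u i : ZMod 2) := by
  classical
  simp only [orbitParity_apply]
  convert sum_fiberwise univ (fun i => (⟦i⟧ : orbitRel.Quotient G I)) (fun i => (u i : ZMod 2))

theorem orbitParity_single [DecidableEq I] [DecidableEq (orbitRel.Quotient G I)] (i : I) :
    orbitParity G I (Pi.single i 1) = Pi.single ⟦i⟧ 1 := by
  ext O
  simp [orbitParity_apply, Pi.single_apply, Int.cast_ite, eq_comm]

theorem orbitParity_surjective : Function.Surjective (orbitParity G I) := by
  classical
  have := Fintype.ofFinite (orbitRel.Quotient G I)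
  intro w
  refine ⟨∑ O, ((w O).val : ℤ) • Pi.single O.out 1, ?_⟩
  conv_rhs => rw [pi_eq_sum_univ' w]
  simp only [map_sum, map_smul, orbitParity_single, Quotient.out_eq]
  refine sum_congr rfl fun O _ => ?_
  rw [← Int.cast_smul_eq_zsmul (ZMod 2)]
  simp

theorem ker_orbitParity_le [DecidableEq I] {L : Submodule ℤ (I → ℤ)}
    (hdiff : ∀ i, ∀ j ∈ orbit G i, Pi.single i 1 - Pi.single j 1 ∈ L)
    (htwo : ∀ i, (2 : ℤ) • Pi.single i 1 ∈ L) : LinearMap.ker (orbitParity G I) ≤ L := by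
  classical
  have := Fintype.ofFinite (orbitRel.Quotient G I)
  intro u hu
  rw [← Submodule.Quotient.mk_eq_zero]
  let e (i : I) : (I → ℤ) ⧸ L := L.mkQ (Pi.single i 1)
  have he (i : I) : e i = e (⟦i⟧ : orbitRel.Quotient G I).out := by
    simp only [e, Submodule.mkQ_apply, Submodule.Quotient.eq]
    exact hdiff _ _ (orbitRel_apply.1 (Quotient.exact (Quotient.out_eq _)))
  have h2 (i : I) : (2 : ℤ) • e i = 0 := (Submodule.Quotient.mk_eq_zero L).2 (htwo i)
  have heven (O : orbitRel.Quotient G I) :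
      (2 : ℤ) ∣ ∑ i with (⟦i⟧ : orbitRel.Quotient G I) = O, u i := by
    refine (ZMod.intCast_zmod_eq_zero_iff_dvd _ 2).1 ?_
    rw [Int.cast_sum]
    exact congrFun hu O
  calc L.mkQ u
      = ∑ i, u i • e i := by
        conv_lhs => rw [pi_eq_sum_univ' u]
        simp only [map_sum, map_smul, e]
    _ = ∑ O, ∑ i with (⟦i⟧ : orbitRel.Quotient G I) = O, u i • e O.out := by
        rw [← sum_fiberwise univ (fun i => (⟦i⟧ : orbitRel.Quotient G I))]
        refine sum_congr rfl fun O _ => sum_congr rfl fun i hi => ?_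
        rw [he, (mem_filter.1 hi).2]
    _ = 0 := by
        refine sum_eq_zero fun O _ => ?_
        obtain ⟨m, hm⟩ := heven O
        rw [← sum_smul, hm, mul_comm, mul_smul, h2, smul_zero]

theorem exists_orbitParity_one_eq_one [Fintype (orbitRel.Quotient G I)]
    (h : Odd (Fintype.card I)) : ∃ O, orbitParity G I 1 O = 1 := by
  have hsum : ∑ O, orbitParity G I 1 O ≠ 0 := by
    simp [sum_orbitParity, (ZMod.natCast_eq_one_iff_odd).2 h]
  obtain ⟨O, -, hO⟩ := exists_ne_zero_of_sum_ne_zero hsum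
  have hZMod2 : ∀ a : ZMod 2, a ≠ 0 → a = 1 := by decide
  exact ⟨O, hZMod2 _ hO⟩

end OrbitParity

section ProjAway

variable {R ι : Type*} [CommRing R]

/-- With `χ i₀ = 1`, this realises the quotient map `(ι → R) → (ι → R) ⧸ R ∙ χ` on the
coordinates other than `i₀`. -/
def projAway (χ : ι → R) (i₀ : ι) : (ι → R) →ₗ[R] ({i // i ≠ i₀} → R) where
  toFun w i := w i - χ i * w i₀
  map_add' w w' := by ext; simp only [Pi.add_apply]; ring
  map_smul' a w := by ext; simp only [Pi.smul_apply, smul_eq_mul, RingHom.id_apply]; ring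

theorem projAway_apply (χ : ι → R) (i₀ : ι) (w : ι → R) (i : {i // i ≠ i₀}) :
    projAway χ i₀ w i = w i - χ i * w i₀ := rfl

theorem projAway_surjective (χ : ι → R) (i₀ : ι) : Function.Surjective (projAway χ i₀) := by
  classical
  intro t
  refine ⟨fun i => if h : i = i₀ then 0 else t ⟨i, h⟩, ?_⟩
  ext ⟨i, hi⟩
  simp [projAway_apply, hi]

theorem ker_projAway {χ : ι → R} {i₀ : ι} (h : χ i₀ = 1) :
    LinearMap.ker (projAway χ i₀) = Submodule.span R {χ} := by
  ext w
  rw [LinearMap.mem_ker, Submodule.mem_span_singleton]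
  constructor
  · intro hw
    refine ⟨w i₀, funext fun i => ?_⟩
    by_cases hi : i = i₀
    · subst hi
      simp [h]
    · have := congrFun hw ⟨i, hi⟩
      rw [projAway_apply, Pi.zero_apply, sub_eq_zero] at this
      simp [this, mul_comm]
  · rintro ⟨a, rfl⟩
    ext i
    simp [projAway_apply, h, mul_comm]

end ProjAway

theorem span_setOf_eq_sub_eq_coinvariantsKer {k G V : Type*} [CommRing k] [Group G]
    [AddCommGroup V] [Module k V] (ρ : Representation k G V) :
    Submodule.span k {x | ∃ g : G, ∃ y, x = ρ g y - y} = Coinvariants.ker ρ := by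
  rw [Coinvariants.ker]
  congr 1
  ext x
  simp [eq_comm]

theorem single_apply_inv_smul {G I M : Type*} [Group G] [MulAction G I] [DecidableEq I] [Zero M]
    (σ : G) (i j : I) (a : M) :
    (Pi.single i a : I → M) (σ⁻¹ • j) = (Pi.single (σ • i) a : I → M) j := by
  simp [Pi.single_apply, inv_smul_eq_iff]

section Lattice

variable {G : Type*} [Group G] {I : Type*} [MulAction G I]

structure IsTwistedPermLattice (N : Subgroup G) (ρ : Representation ℤ G ((I → ℤ) × ℤ)) :
    Prop where
  apply_of_mem : ∀ σ ∈ N, ∀ (v : I → ℤ) (c : ℤ), ρ σ (v, c) = (fun j => v (σ⁻¹ • j), c)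
  apply_of_notMem : ∀ σ ∉ N, ∀ (v : I → ℤ) (c : ℤ),
    ρ σ (v, c) = (fun j => -v (σ⁻¹ • j) - c, c)

variable {N : Subgroup G} {ρ : Representation ℤ G ((I → ℤ) × ℤ)}

theorem exists_notMem_smul_eq_self (hN : N.index = 2)
    (htrans : ∀ i j : I, j ∈ orbit G i → ∃ σ ∈ N, σ • i = j) (j : I) :
    ∃ τ ∉ N, τ • j = j := by
  have hNtop : N ≠ ⊤ := by
    rintro rfl
    simp at hN
  obtain ⟨τ, -, hτ⟩ := SetLike.exists_of_lt hNtop.lt_top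
  obtain ⟨ν, hν, hνj⟩ := htrans j (τ⁻¹ • j) (mem_orbit j τ⁻¹)
  refine ⟨τ * ν, by simp [Subgroup.mul_mem_iff_of_index_two hN, hτ, hν], ?_⟩
  rw [mul_smul, hνj, smul_inv_smul]

namespace IsTwistedPermLattice

theorem snd_apply (hρ : IsTwistedPermLattice N ρ) (σ : G) (x : (I → ℤ) × ℤ) :
    (ρ σ x).2 = x.2 := by
  by_cases hσ : σ ∈ N
  · rw [hρ.apply_of_mem σ hσ]
  · rw [hρ.apply_of_notMem σ hσ]

theorem norm_apply_snd [Fintype G] (hρ : IsTwistedPermLattice N ρ) (x : (I → ℤ) × ℤ) :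
    (ρ.norm x).2 = Fintype.card G • x.2 := by
  simp [Representation.norm, Prod.snd_sum, hρ.snd_apply]

theorem norm_apply_mk_zero [Fintype G] (hρ : IsTwistedPermLattice N ρ) (hN : N.index = 2)
    (htrans : ∀ i j : I, j ∈ orbit G i → ∃ σ ∈ N, σ • i = j) (v : I → ℤ) :
    ρ.norm (v, 0) = 0 := by
  refine Prod.ext (funext fun j => ?_) (by simp [hρ.norm_apply_snd])
  obtain ⟨τ, hτ, hτj⟩ := exists_notMem_smul_eq_self hN htrans j
  let f (σ : G) : ℤ := (ρ σ (v, 0)).1 j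
  have hf (σ : G) : f (τ * σ) = -f σ := by
    have hσj : (σ⁻¹ * τ⁻¹) • j = σ⁻¹ • j := by rw [mul_smul, inv_smul_eq_iff.2 hτj.symm]
    simp only [f]
    by_cases hσ : σ ∈ N
    · have : τ * σ ∉ N := by simp [Subgroup.mul_mem_iff_of_index_two hN, hτ, hσ]
      rw [hρ.apply_of_notMem _ this, hρ.apply_of_mem σ hσ]
      simp [hσj]
    · have : τ * σ ∈ N := by simp [Subgroup.mul_mem_iff_of_index_two hN, hτ, hσ]
      rw [hρ.apply_of_mem _ this, hρ.apply_of_notMem σ hσ]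
      simp [hσj]
  have hsum : ∑ σ, f σ = -∑ σ, f σ :=
    calc ∑ σ, f σ = ∑ σ, f (τ * σ) :=
          (Fintype.sum_equiv (Equiv.mulLeft τ) _ _ fun _ => rfl).symm
      _ = -∑ σ, f σ := by simp [hf]
  have : ∑ σ, f σ = 0 := by linarith
  simpa [Representation.norm, Prod.fst_sum, f] using this

theorem mem_ker_norm_iff [Fintype G] (hρ : IsTwistedPermLattice N ρ) (hN : N.index = 2)
    (htrans : ∀ i j : I, j ∈ orbit G i → ∃ σ ∈ N, σ • i = j) (x : (I → ℤ) × ℤ) :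
    x ∈ LinearMap.ker ρ.norm ↔ x.2 = 0 := by
  obtain ⟨v, c⟩ := x
  refine ⟨fun h => ?_, fun h => ?_⟩
  · have := congrArg Prod.snd (LinearMap.mem_ker.1 h)
    simpa [hρ.norm_apply_snd, Fintype.card_ne_zero] using this
  · obtain rfl : c = 0 := h
    exact hρ.norm_apply_mk_zero hN htrans v

theorem one_mem_coinvariantsKer (hρ : IsTwistedPermLattice N ρ) (hN : N ≠ ⊤) :
    ((fun _ => 1, 0) : (I → ℤ) × ℤ) ∈ Coinvariants.ker ρ := by
  obtain ⟨τ, -, hτ⟩ := SetLike.exists_of_lt hN.lt_top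
  convert Coinvariants.sub_mem_ker (ρ := ρ) τ ((0 : I → ℤ), -1) using 1
  rw [hρ.apply_of_notMem τ hτ]
  ext <;> simp

theorem single_sub_single_mem_coinvariantsKer [DecidableEq I] (hρ : IsTwistedPermLattice N ρ)
    (htrans : ∀ i j : I, j ∈ orbit G i → ∃ σ ∈ N, σ • i = j) {i j : I} (hj : j ∈ orbit G i) :
    ((Pi.single i 1 - Pi.single j 1, 0) : (I → ℤ) × ℤ) ∈ Coinvariants.ker ρ := by
  obtain ⟨ν, hν, rfl⟩ := htrans i j hj
  rw [← neg_mem_iff]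
  convert Coinvariants.sub_mem_ker (ρ := ρ) ν (Pi.single i 1, 0) using 1
  rw [hρ.apply_of_mem ν hν]
  ext <;> simp [single_apply_inv_smul]

theorem two_smul_single_mem_coinvariantsKer [DecidableEq I] (hρ : IsTwistedPermLattice N ρ)
    (hN : N ≠ ⊤) (htrans : ∀ i j : I, j ∈ orbit G i → ∃ σ ∈ N, σ • i = j) (i : I) :
    (((2 : ℤ) • Pi.single i 1, 0) : (I → ℤ) × ℤ) ∈ Coinvariants.ker ρ := by
  obtain ⟨τ, -, hτ⟩ := SetLike.exists_of_lt hN.lt_top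
  have h := add_mem (Coinvariants.sub_mem_ker (ρ := ρ) τ (Pi.single i 1, 0))
    (hρ.single_sub_single_mem_coinvariantsKer htrans (mem_orbit_symm.1 (mem_orbit i τ)))
  rw [← neg_mem_iff]
  convert h using 1
  rw [hρ.apply_of_notMem τ hτ]
  ext j <;> simp [single_apply_inv_smul]
  ring

theorem coinvariantsKer_le_comap_span [Fintype I] (hρ : IsTwistedPermLattice N ρ) :
    Coinvariants.ker ρ ≤ (Submodule.span ℤ {orbitParity G I 1}).comap
      (orbitParity G I ∘ₗ LinearMap.fst ℤ _ ℤ) := by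
  rw [Coinvariants.ker, Submodule.span_le]
  rintro _ ⟨⟨σ, v, c⟩, rfl⟩
  rw [SetLike.mem_coe, Submodule.mem_comap, Submodule.mem_span_singleton]
  by_cases hσ : σ ∈ N
  · refine ⟨0, ?_⟩
    simp [hρ.apply_of_mem σ hσ, orbitParity_comp_smul]
  · refine ⟨-c, ?_⟩
    have hfun : (fun j => -v (σ⁻¹ • j) - c) = -(fun j => v (σ⁻¹ • j)) - c • 1 := by
      ext
      simp
    rw [LinearMap.comp_apply, LinearMap.fst_apply, Prod.fst_sub, hρ.apply_of_notMem σ hσ, hfun,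
      map_sub, map_sub, map_neg, map_smul, orbitParity_comp_smul]
    ext O
    simp only [Pi.sub_apply, Pi.neg_apply, Pi.smul_apply]
    ring_nf
    reduce_mod_char

theorem inl_mem_coinvariantsKer_iff [Fintype I] (hρ : IsTwistedPermLattice N ρ)
    (hN : N ≠ ⊤) (htrans : ∀ i j : I, j ∈ orbit G i → ∃ σ ∈ N, σ • i = j) (u : I → ℤ) :
    ((u, 0) : (I → ℤ) × ℤ) ∈ Coinvariants.ker ρ ↔
      orbitParity G I u ∈ Submodule.span ℤ {orbitParity G I 1} := by
  classical
  refine ⟨fun h => hρ.coinvariantsKer_le_comap_span h, fun h => ?_⟩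
  obtain ⟨a, ha⟩ := Submodule.mem_span_singleton.1 h
  have hu : u - a • 1 ∈ LinearMap.ker (orbitParity G I) := by
    rw [LinearMap.mem_ker, map_sub, map_smul, ha, sub_self]
  have h0 : ((u - a • 1, 0) : (I → ℤ) × ℤ) ∈ Coinvariants.ker ρ :=
    ker_orbitParity_le (L := (Coinvariants.ker ρ).comap (LinearMap.inl ℤ _ ℤ))
      (fun _ _ hj => hρ.single_sub_single_mem_coinvariantsKer htrans hj)
      (hρ.two_smul_single_mem_coinvariantsKer hN htrans) hu
  convert add_mem h0 (Submodule.smul_mem _ a (hρ.one_mem_coinvariantsKer hN)) using 1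
  ext <;> simp

theorem projAway_orbitParity_eq_zero_iff [Fintype I] (hρ : IsTwistedPermLattice N ρ)
    (hN : N ≠ ⊤) (htrans : ∀ i j : I, j ∈ orbit G i → ∃ σ ∈ N, σ • i = j)
    {O₀ : orbitRel.Quotient G I} (hO₀ : orbitParity G I 1 O₀ = 1) (u : I → ℤ) :
    projAway (orbitParity G I 1) O₀ (orbitParity G I u) = 0 ↔
      ((u, 0) : (I → ℤ) × ℤ) ∈ Coinvariants.ker ρ := by
  rw [hρ.inl_mem_coinvariantsKer_iff hN htrans, ← LinearMap.mem_ker, ker_projAway hO₀,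
    ← Submodule.restrictScalars_span ℤ (ZMod 2) ZMod.intCast_surjective,
    Submodule.restrictScalars_mem]

end IsTwistedPermLattice

end Lattice

/-- Tate cohomology `Ĥ⁻¹` of the lattice `M = ⟨e_i (i ∈ I), f⟩` with `σ·e_i = e_{σi}`,
`σ·f = f` for `σ ∈ N`, and `σ·e_i = −e_{σi}`, `σ·f = f − ∑ e_i` for `σ ∉ N`, where
`|I| = r` is odd and `N` (of index 2) acts transitively on each `G`-orbit:
`Z/B ≅ (ℤ/2ℤ)^{r′−1}` with `r′` the number of orbits.
Here `M` is realised as `(I → ℤ) × ℤ`, with `e_i` the indicator of `i` and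
`f = (0, 1)`. -/
theorem tate_neg_one_odd_case
    (G : Type) [Group G] [Fintype G] (N : Subgroup G) (hN : N.index = 2)
    (I : Type) [Fintype I] [MulAction G I]
    (r r' : ℕ) (hr : Fintype.card I = r) (hodd : Odd r)
    (hr' : Nat.card (MulAction.orbitRel.Quotient G I) = r')
    (htrans : ∀ i j : I, j ∈ MulAction.orbit G i → ∃ σ ∈ N, σ • i = j)
    (ρ : Representation ℤ G ((I → ℤ) × ℤ))
    (hρN : ∀ σ ∈ N, ∀ (v : I → ℤ) (c : ℤ),
      ρ σ (v, c) = (fun j => v (σ⁻¹ • j), c))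
    (hρ : ∀ σ ∉ N, ∀ (v : I → ℤ) (c : ℤ),
      ρ σ (v, c) = (fun j => -v (σ⁻¹ • j) - c, c)) :
    Nonempty
      ((LinearMap.ker (∑ σ : G, ρ σ) ⧸
        (Submodule.span ℤ {x : (I → ℤ) × ℤ | ∃ σ : G, ∃ y, x = ρ σ y - y}).comap
          (LinearMap.ker (∑ σ : G, ρ σ)).subtype) ≃+
      (Fin (r' - 1) → ZMod 2)) := by
  classical
  have := Fintype.ofFinite (orbitRel.Quotient G I)
  have hlat : IsTwistedPermLattice N ρ := ⟨hρN, hρ⟩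
  have hNtop : N ≠ ⊤ := by
    rintro rfl
    simp at hN
  obtain ⟨O₀, hO₀⟩ := exists_orbitParity_one_eq_one (G := G) (hr ▸ hodd)
  let Φ : ρ.norm.ker →ₗ[ℤ] ({O // O ≠ O₀} → ZMod 2) :=
    (projAway (orbitParity G I 1) O₀).restrictScalars ℤ ∘ₗ orbitParity G I ∘ₗ
      LinearMap.fst ℤ _ ℤ ∘ₗ ρ.norm.ker.subtype
  have hsurj : Function.Surjective Φ := by
    intro t
    obtain ⟨w, rfl⟩ := projAway_surjective (orbitParity G I 1) O₀ t
    obtain ⟨u, rfl⟩ := orbitParity_surjective w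
    exact ⟨⟨(u, 0), (hlat.mem_ker_norm_iff hN htrans _).2 rfl⟩, rfl⟩
  have hker : LinearMap.ker Φ = (Coinvariants.ker ρ).comap ρ.norm.ker.subtype := by
    ext ⟨⟨u, c⟩, hx⟩
    obtain rfl : c = 0 := (hlat.mem_ker_norm_iff hN htrans _).1 hx
    exact hlat.projAway_orbitParity_eq_zero_iff hNtop htrans hO₀ u
  have hcard : Fintype.card {O // O ≠ O₀} = r' - 1 := by
    rw [Fintype.card_subtype_compl, Fintype.card_subtype_eq, ← Nat.card_eq_fintype_card, hr']
  rw [span_setOf_eq_sub_eq_coinvariantsKer]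
  exact ⟨(((Submodule.quotEquivOfEq _ _ hker.symm).trans (Φ.quotKerEquivOfSurjective hsurj)).trans
    (LinearEquiv.funCongrLeft ℤ (ZMod 2) (Fintype.equivFinOfCardEq hcard).symm)).toAddEquiv⟩
end

section
/- Let G be a finite group, N ≤ G a subgroup of index 2, and I a finite G-set of even cardinality r with r′ orbits, such that N acts transitively on each G-orbit of I. Let M be the G-lattice with ℤ-basis {e_i : i ∈ I} ∪ {f, g} and G-action given by: for σ ∈ N, σ·e_i = e_{σ·i}, σ·f = f, σ·g = g; for σ ∈ G∖N, σ·e_i = −e_{σ·i} + g, σ·f = f − Σ_{i∈I} e_i + (r/2)·g, σ·g = g. Then the first group cohomology H¹(G, M) is isomorphic as an abelian group to (ℤ/2ℤ)^{r′−1} if every G-orbit of I has even cardinality, and to (ℤ/2ℤ)^{r′−2} if some G-orbit of I has odd cardinality. -/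
/-!
Restricted to `N`, the lattice `M` is a permutation lattice plus a trivial one, so `H¹(N, M) = 0`:
a cocycle of a finite group with values in `ℤ^X` is a coboundary because homomorphisms from the
stabilizers to `ℤ` vanish. Every class of `H¹(G, M)` is therefore represented by a cocycle that
vanishes on `N`, and such a cocycle is `0` on `N` and a constant `m` off `N`, where
`m = (w, 0, d)` with `w` constant on the `G`-orbits and `∑ w = -2d`. The parities of `w` on the
orbits identify `H¹(G, M)` with the kernel of `a ↦ ∑_O |O| a_O` on `𝔽₂^{I/G}` modulo the constant
vector `1`, the image of the coboundary of `f`. That linear form vanishes exactly when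
all orbits are even, whence the dimensions `r' - 1` and `r' - 2`.
-/

open MulAction groupCohomology

section OrbitRepresentatives

variable {H X : Type*} [Group H] [MulAction H X]

theorem mk_smul_eq (h : H) (y : X) :
    (Quotient.mk'' (h • y) : orbitRel.Quotient H X) = Quotient.mk'' y :=
  Quotient.sound' (orbitRel_apply.2 (mem_orbit y h))

theorem exists_smul_out_eq (y : X) :
    ∃ n : H, n • (Quotient.mk'' y : orbitRel.Quotient H X).out = y :=
  orbitRel_apply.1 (Quotient.exact' (Quotient.out_eq' _).symm)

end OrbitRepresentatives

section FiniteGroup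

variable {H : Type*} [Group H] [Finite H]

theorem eq_zero_of_map_mul_eq_add {φ : H → ℤ} (hφ : ∀ a b, φ (a * b) = φ a + φ b) (a : H) :
    φ a = 0 :=
  ((AddMonoidHom.mk' (φ ∘ Additive.toMul) fun a b => hφ a.toMul b.toMul).isOfFinAddOrder
    (isOfFinAddOrder_of_finite (Additive.ofMul a))).eq_zero'

theorem exists_eq_sub_of_permCocycle {X : Type*} [MulAction H X] {c : H → X → ℤ}
    (hc : ∀ g h y, c (g * h) y = c h (g⁻¹ • y) + c g y) :
    ∃ V : X → ℤ, ∀ h y, c h y = V y - V (h⁻¹ • y) := by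
  choose n hn using exists_smul_out_eq (H := H) (X := X)
  refine ⟨fun y => c (n y) y, fun h y => ?_⟩
  set o := (Quotient.mk'' y : orbitRel.Quotient H X).out
  have hstab : ∀ t : stabilizer H o, c t o = 0 :=
    eq_zero_of_map_mul_eq_add (φ := fun t : stabilizer H o => c t o) fun a b => by
      simp only [Subgroup.coe_mul, hc, inv_smul_eq_iff.2 a.2.symm, add_comm]
  have hy : n y • o = y := hn y
  have hy' : n (h⁻¹ • y) • o = h⁻¹ • y := by simpa only [o, mk_smul_eq] using hn (h⁻¹ • y)
  -- `h * n (h⁻¹ • y)` and `n y` both carry `o` to `y`, so they differ by a stabilizer element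
  set t := (n y)⁻¹ * (h * n (h⁻¹ • y))
  have ht : t • o = o := by
    rw [mul_smul, mul_smul, hy', smul_inv_smul, inv_smul_eq_iff, hy]
  have h₁ := hc h (n (h⁻¹ • y)) y
  have h₂ := hc (n y) t y
  rw [mul_inv_cancel_left, inv_smul_eq_iff.2 hy.symm, hstab ⟨t, ht⟩] at h₂
  simp only
  linarith

end FiniteGroup

theorem exists_notMem_of_index_eq_two {G : Type*} [Group G] {N : Subgroup G}
    (hN : N.index = 2) : ∃ τ, τ ∉ N := by
  by_contra! h
  rw [Subgroup.index_eq_one.2 ((Subgroup.eq_top_iff' N).2 h)] at hN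
  omega

theorem nonempty_addEquiv_of_ker_eq {A B C : Type*} [AddCommGroup A] [AddCommGroup B]
    [AddCommGroup C] {f : A →+ B} {g : A →+ C} (hf : Function.Surjective f)
    (hg : Function.Surjective g) (hfg : ∀ a, f a = 0 ↔ g a = 0) : Nonempty (B ≃+ C) :=
  ⟨(QuotientAddGroup.quotientKerEquivOfSurjective f hf).symm.trans <|
    (QuotientAddGroup.quotientAddEquivOfEq (AddSubgroup.ext fun a => by simp [hfg])).trans
      (QuotientAddGroup.quotientKerEquivOfSurjective g hg)⟩

theorem finrank_quotient_span_const {ι F : Type*} [Field F] [Finite ι] {K : Submodule F (ι → F)}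
    (hu : (fun _ => 1) ∈ K) :
    Module.finrank F (K ⧸ F ∙ (⟨fun _ => 1, hu⟩ : K)) = Module.finrank F K - 1 := by
  have h := (F ∙ (⟨fun _ => 1, hu⟩ : K)).finrank_quotient_add_finrank
  rcases isEmpty_or_nonempty ι with hι | ⟨⟨i⟩⟩
  · have : Module.finrank F K = 0 := Module.finrank_zero_of_subsingleton
    omega
  · rw [finrank_span_singleton fun h0 => one_ne_zero (congrFun (congrArg Subtype.val h0) i)] at h
    omega

namespace IndexTwoLattice

section SignCocycle

variable {G V : Type} [Group G] [AddCommGroup V] {N : Subgroup G} {ρ : Representation ℤ G V}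

open Classical in
def IsSignInvariant (N : Subgroup G) (ρ : Representation ℤ G V) (m : V) : Prop :=
  ∀ σ, ρ σ m = if σ ∈ N then m else -m

open Classical in
noncomputable def signCocycle (N : Subgroup G) (m : V) : G → V := fun σ => if σ ∈ N then 0 else m

theorem cocycle_apply_mul (c : cocycles₁ (Rep.of ρ)) (g h : G) : c (g * h) = ρ g (c h) + c g :=
  (mem_cocycles₁_iff c).1 c.2 g h

theorem signCocycle_mem_cocycles₁ (hN : N.index = 2) {m : V} (hm : IsSignInvariant N ρ m) :
    signCocycle N m ∈ cocycles₁ (Rep.of ρ) := by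
  classical
  refine (mem_cocycles₁_iff _).2 fun g h => ?_
  have hgh := Subgroup.mul_mem_iff_of_index_two hN (a := g) (b := h)
  simp only [signCocycle]
  by_cases hg : g ∈ N <;> by_cases hh : h ∈ N <;> simp_all [hm g]

variable (ρ) in
def coboundary : V →ₗ[ℤ] cocycles₁ (Rep.of ρ) where
  toFun x := ⟨fun g => ρ g x - x, (mem_cocycles₁_iff _).2 fun g h => by
    simp only [map_mul, Module.End.mul_apply, map_sub]; abel⟩
  map_add' x y := by
    ext g
    change ρ g (x + y) - (x + y) = (ρ g x - x) + (ρ g y - y)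
    rw [map_add]; abel
  map_smul' z x := by
    ext g
    change ρ g (z • x) - z • x = z • (ρ g x - x)
    rw [map_zsmul, smul_sub]

theorem coboundary_apply (x : V) (g : G) : coboundary ρ x g = ρ g x - x := rfl

theorem H1π_eq_zero_iff_exists_coboundary (c : cocycles₁ (Rep.of ρ)) :
    H1π (Rep.of ρ) c = 0 ↔ ∃ x, coboundary ρ x = c := by
  rw [H1π_eq_zero_iff]
  exact ⟨fun ⟨x, hx⟩ => ⟨x, cocycles₁_ext fun g => congrFun hx g⟩,
    fun ⟨x, hx⟩ => ⟨x, funext fun g => by rw [← hx]; rfl⟩⟩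

variable (hN : N.index = 2) {c : cocycles₁ (Rep.of ρ)} (hc : ∀ n ∈ N, c n = 0)
include hN hc

theorem map_apply_of_eq_zero_on (τ : G) {n : G} (hn : n ∈ N) : ρ n (c τ) = c τ := by
  have hconj : τ⁻¹ * n * τ ∈ N := by
    simpa using (Subgroup.normal_of_index_eq_two hN).conj_mem n hn τ⁻¹
  have h := cocycle_apply_mul c τ (τ⁻¹ * n * τ)
  rw [hc _ hconj, map_zero, zero_add, show τ * (τ⁻¹ * n * τ) = n * τ by group,
    cocycle_apply_mul, hc n hn, add_zero] at h
  exact h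

variable {τ : G} (hτ : τ ∉ N)
include hτ

theorem coe_eq_signCocycle_of_eq_zero_on : ⇑c = signCocycle N (c τ) := by
  classical
  funext σ
  by_cases hσ : σ ∈ N
  · simp [signCocycle, hσ, hc σ hσ]
  · have hστ : σ * τ⁻¹ ∈ N :=
      (Subgroup.mul_mem_iff_of_index_two hN).2 (iff_of_false hσ (by simpa using hτ))
    have h := cocycle_apply_mul c (σ * τ⁻¹) τ
    rw [inv_mul_cancel_right, hc _ hστ, add_zero, map_apply_of_eq_zero_on hN hc τ hστ] at h
    simp [signCocycle, hσ, h]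

theorem isSignInvariant_of_eq_zero_on : IsSignInvariant N ρ (c τ) := by
  intro σ
  split_ifs with hσ
  · exact map_apply_of_eq_zero_on hN hc τ hσ
  · have h := cocycle_apply_mul c σ τ
    rw [hc _ ((Subgroup.mul_mem_iff_of_index_two hN).2 (iff_of_false hσ hτ)),
      congrFun (coe_eq_signCocycle_of_eq_zero_on hN hc hτ) σ] at h
    simp only [signCocycle, if_neg hσ] at h
    exact eq_neg_of_add_eq_zero_left h.symm

end SignCocycle

section OrbitSum

variable {G I : Type} [Group G] [MulAction G I] [Fintype I]

variable (G I) in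
def orbitSum : (orbitRel.Quotient G I → ZMod 2) →ₗ[ZMod 2] ZMod 2 where
  toFun a := ∑ i : I, a (Quotient.mk'' i)
  map_add' a b := Finset.sum_add_distrib
  map_smul' t a := by simp [Finset.mul_sum]

theorem orbitSum_apply [Fintype (orbitRel.Quotient G I)] (a : orbitRel.Quotient G I → ZMod 2) :
    orbitSum G I a = ∑ ω, (Nat.card ω.orbit : ZMod 2) * a ω := by
  classical
  change ∑ i : I, a (Quotient.mk'' i) = _
  rw [← (selfEquivSigmaOrbits' G I).symm.sum_comp, Fintype.sum_sigma]
  refine Finset.sum_congr rfl fun ω _ => ?_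
  calc ∑ x : ω.orbit, a (Quotient.mk'' ((selfEquivSigmaOrbits' G I).symm ⟨ω, x⟩))
      = ∑ _x : ω.orbit, a ω :=
        Finset.sum_congr rfl fun x _ => congrArg a (orbitRel.Quotient.mem_orbit.1 x.2)
    _ = (Nat.card ω.orbit : ZMod 2) * a ω := by simp [Nat.card_eq_fintype_card]

theorem orbitSum_eq_zero_of_even (h : ∀ i : I, Even (Nat.card (orbit G i))) :
    orbitSum G I = 0 := by
  classical
  refine LinearMap.ext fun a => ?_
  rw [orbitSum_apply, LinearMap.zero_apply]
  refine Finset.sum_eq_zero fun ω _ => ?_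
  rw [← Quotient.out_eq' ω, orbitRel.Quotient.orbit_mk,
    ZMod.natCast_eq_zero_iff_even.2 (h _), zero_mul]

theorem orbitSum_ne_zero_of_odd {i : I} (h : Odd (Nat.card (orbit G i))) : orbitSum G I ≠ 0 := by
  classical
  intro h0
  have := LinearMap.congr_fun h0 (Pi.single (Quotient.mk'' i) 1)
  rw [orbitSum_apply, LinearMap.zero_apply] at this
  simp only [Pi.single_apply, mul_ite, mul_one, mul_zero, Finset.sum_ite_eq', Finset.mem_univ,
    if_true, orbitRel.Quotient.orbit_mk, ZMod.natCast_eq_one_iff_odd.2 h] at this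
  exact one_ne_zero this

theorem finrank_ker_orbitSum_of_even (h : ∀ i : I, Even (Nat.card (orbit G i))) :
    Module.finrank (ZMod 2) (LinearMap.ker (orbitSum G I)) = Nat.card (orbitRel.Quotient G I) := by
  classical
  rw [orbitSum_eq_zero_of_even h, LinearMap.ker_zero, finrank_top,
    Module.finrank_fintype_fun_eq_card, Nat.card_eq_fintype_card]

theorem finrank_ker_orbitSum_of_odd {i : I} (h : Odd (Nat.card (orbit G i))) :
    Module.finrank (ZMod 2) (LinearMap.ker (orbitSum G I)) =
      Nat.card (orbitRel.Quotient G I) - 1 := by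
  classical
  have := Module.Dual.finrank_ker_add_one_of_ne_zero (orbitSum_ne_zero_of_odd h)
  rw [Module.finrank_fintype_fun_eq_card, ← Nat.card_eq_fintype_card] at this
  omega

end OrbitSum

section Lattice

variable {G I : Type} [Group G] [MulAction G I] {N : Subgroup G}
  {ρ : Representation ℤ G ((I → ℤ) × ℤ × ℤ)} (hN : N.index = 2)
  (hρN : ∀ σ ∈ N, ∀ (v : I → ℤ) (c d : ℤ), ρ σ (v, c, d) = (fun j => v (σ⁻¹ • j), c, d))
  (htrans : ∀ i j : I, j ∈ orbit G i → ∃ σ ∈ N, σ • i = j)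

include hρN in
theorem map_of_mem {σ : G} (hσ : σ ∈ N) (x : (I → ℤ) × ℤ × ℤ) :
    ρ σ x = (fun j => x.1 (σ⁻¹ • j), x.2.1, x.2.2) :=
  hρN σ hσ x.1 x.2.1 x.2.2

include hN htrans in
theorem exists_notMem_smul_eq_self (y : I) : ∃ σ ∉ N, σ • y = y := by
  obtain ⟨τ, hτ⟩ := exists_notMem_of_index_eq_two hN
  obtain ⟨n, hn, hny⟩ := htrans y (τ⁻¹ • y) (mem_orbit y τ⁻¹)
  refine ⟨τ * n, fun h => ?_, by rw [mul_smul, hny, smul_inv_smul]⟩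
  exact hτ (((Subgroup.mul_mem_iff_of_index_two hN).1 h).2 hn)

include hρN in
theorem exists_eq_coboundary_on [Finite G] (c : cocycles₁ (Rep.of ρ)) :
    ∃ x, ∀ n ∈ N, c n = coboundary ρ x n := by
  obtain ⟨V, hV⟩ := exists_eq_sub_of_permCocycle (H := N) (X := I) (c := fun n y => (c n).1 y)
    fun g h y => by
      simp only [Subgroup.coe_mul, cocycle_apply_mul c g h, Prod.fst_add, Pi.add_apply,
        map_of_mem hρN g.2, Subgroup.smul_def, InvMemClass.coe_inv]
  have h₂ := eq_zero_of_map_mul_eq_add (φ := fun n : N => (c n).2.1) fun g h => by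
    simp [cocycle_apply_mul c g h, map_of_mem hρN g.2, add_comm]
  have h₃ := eq_zero_of_map_mul_eq_add (φ := fun n : N => (c n).2.2) fun g h => by
    simp [cocycle_apply_mul c g h, map_of_mem hρN g.2, add_comm]
  refine ⟨(-V, 0, 0), fun n hn => ?_⟩
  rw [coboundary_apply, map_of_mem hρN hn]
  ext y
  · simp [hV ⟨n, hn⟩ y, Subgroup.smul_def]
    ring
  · simpa using h₂ ⟨n, hn⟩
  · simpa using h₃ ⟨n, hn⟩

variable {m : (I → ℤ) × ℤ × ℤ} (hm : IsSignInvariant N ρ m)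

include hρN htrans hm in
theorem IsSignInvariant.fst_smul (σ : G) (y : I) : m.1 (σ • y) = m.1 y := by
  obtain ⟨n, hn, hny⟩ := htrans y (σ • y) (mem_orbit y σ)
  have h := congrArg (fun x => x.1 y) (hm n⁻¹)
  simp only [inv_mem_iff, hn, if_true, map_of_mem hρN (inv_mem hn), inv_inv] at h
  rw [← hny, h]

include hρN htrans hm in
theorem IsSignInvariant.fst_out (y : I) :
    m.1 (Quotient.mk'' y : orbitRel.Quotient G I).out = m.1 y := by
  obtain ⟨n, hn⟩ := exists_smul_out_eq (H := G) y
  rw [← hm.fst_smul hρN htrans n, hn]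

-- Evaluating at an element `s O ∉ N` fixing `O.out` makes this additive in `c` without first
-- normalising `c` on `N`; on a cocycle vanishing on `N` it reads off the parity of `w` on `O`.
noncomputable def cocycleParity (s : orbitRel.Quotient G I → G) :
    cocycles₁ (Rep.of ρ) →+ (orbitRel.Quotient G I → ZMod 2) where
  toFun c O := ((c (s O)).1 O.out : ZMod 2)
  map_zero' := by ext O; rfl
  map_add' c c' := funext fun O => Int.cast_add _ _

variable {s : orbitRel.Quotient G I → G} (hsN : ∀ O, s O ∉ N) (hs : ∀ O, s O • O.out = O.out)

include hN hsN in
theorem cocycleParity_of_eq_zero_on {c : cocycles₁ (Rep.of ρ)} (hc : ∀ n ∈ N, c n = 0)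
    {τ : G} (hτ : τ ∉ N) : cocycleParity s c = fun O => ((c τ).1 O.out : ZMod 2) := by
  ext O
  simp only [cocycleParity, AddMonoidHom.coe_mk, ZeroHom.coe_mk,
    congrFun (coe_eq_signCocycle_of_eq_zero_on hN hc hτ) (s O), signCocycle, if_neg (hsN O)]

variable [Fintype I] {r : ℕ}
  (hρ : ∀ σ ∉ N, ∀ (v : I → ℤ) (c d : ℤ), ρ σ (v, c, d) =
    (fun j => -v (σ⁻¹ • j) - c, c, (∑ i : I, v i) + c * ((r : ℤ) / 2) + d))

include hρ in
theorem map_of_notMem {σ : G} (hσ : σ ∉ N) (x : (I → ℤ) × ℤ × ℤ) :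
    ρ σ x = (fun j => -x.1 (σ⁻¹ • j) - x.2.1, x.2.1,
      (∑ i : I, x.1 i) + x.2.1 * ((r : ℤ) / 2) + x.2.2) :=
  hρ σ hσ x.1 x.2.1 x.2.2

include hρ hm in
theorem IsSignInvariant.snd_eq_zero {τ : G} (hτ : τ ∉ N) : m.2.1 = 0 := by
  have h := congrArg (fun x => x.2.1) (hm τ)
  simp only [if_neg hτ, map_of_notMem hρ hτ, Prod.snd_neg, Prod.fst_neg] at h
  omega

include hρ hm in
theorem IsSignInvariant.sum_fst {τ : G} (hτ : τ ∉ N) : ∑ i, m.1 i = -(2 * m.2.2) := by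
  have h := congrArg (fun x => x.2.2) (hm τ)
  simp only [if_neg hτ, map_of_notMem hρ hτ, Prod.snd_neg, hm.snd_eq_zero hρ hτ] at h
  linarith

include hρN hρ in
theorem isSignInvariant_mk {w : I → ℤ} (hw : ∀ (σ : G) y, w (σ • y) = w y) {d : ℤ}
    (hd : ∑ i, w i = -(2 * d)) : IsSignInvariant N ρ (w, 0, d) := by
  intro σ
  split_ifs with hσ
  · rw [map_of_mem hρN hσ]
    simp only [hw]
  · rw [map_of_notMem hρ hσ]
    ext y <;> simp [hw, hd]
    ring

include hρN hρ htrans hm in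
theorem exists_coboundary_eq_signCocycle (heven : ∀ y, Even (m.1 y)) :
    ∃ x, ⇑(coboundary ρ x) = signCocycle N m := by
  classical
  choose w hw using heven
  have hw_smul (σ : G) (y : I) : w (σ • y) = w y := by
    have := hm.fst_smul hρN htrans σ y
    rw [hw, hw] at this
    omega
  refine ⟨(-w, 0, 0), funext fun σ => ?_⟩
  rw [coboundary_apply]
  by_cases hσ : σ ∈ N
  · rw [map_of_mem hρN hσ]
    ext y <;> simp [signCocycle, hσ, hw_smul]
  · rw [map_of_notMem hρ hσ]
    have hsum := hm.sum_fst hρ hσ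
    simp only [hw, Finset.sum_add_distrib] at hsum
    ext y <;> simp [signCocycle, hσ, hw_smul, hw, hm.snd_eq_zero hρ hσ]
    linarith

include hρ hsN hs in
theorem cocycleParity_coboundary (x : (I → ℤ) × ℤ × ℤ) :
    cocycleParity s (coboundary ρ x) = (x.2.1 : ZMod 2) • fun _ => 1 := by
  ext O
  have hinv : (s O)⁻¹ • O.out = O.out := inv_smul_eq_iff.2 (hs O).symm
  simp only [cocycleParity, AddMonoidHom.coe_mk, ZeroHom.coe_mk, coboundary_apply,
    map_of_notMem hρ (hsN O), Prod.fst_sub, Pi.sub_apply, hinv, Pi.smul_apply, smul_eq_mul,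
    mul_one]
  rw [show -x.1 O.out - x.2.1 - x.1 O.out = x.2.1 - 2 * (x.1 O.out + x.2.1) by ring]
  push_cast
  simp [show (2 : ZMod 2) = 0 from rfl]

include hN hρN hρ htrans hsN hs in
theorem orbitSum_cocycleParity [Finite G] (hu : orbitSum G I (fun _ => 1) = 0)
    (c : cocycles₁ (Rep.of ρ)) : orbitSum G I (cocycleParity s c) = 0 := by
  obtain ⟨τ, hτ⟩ := exists_notMem_of_index_eq_two hN
  obtain ⟨x, hx⟩ := exists_eq_coboundary_on hρN c
  set c' := c - coboundary ρ x
  have hc' : ∀ n ∈ N, c' n = 0 := fun n hn => sub_eq_zero.2 (hx n hn)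
  have hm := isSignInvariant_of_eq_zero_on hN hc' hτ
  have hsplit : cocycleParity s c = cocycleParity s c' + (x.2.1 : ZMod 2) • fun _ => 1 := by
    rw [← cocycleParity_coboundary hsN hs hρ, ← map_add, sub_add_cancel]
  rw [hsplit, map_add, map_smul, hu, smul_zero, add_zero,
    cocycleParity_of_eq_zero_on hN hsN hc' hτ]
  change ∑ i : I, (((c' τ).1 (Quotient.mk'' i : orbitRel.Quotient G I).out : ℤ) : ZMod 2) = 0
  simp only [hm.fst_out hρN htrans, ← Int.cast_sum, hm.sum_fst hρ hτ]
  push_cast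
  simp [show (2 : ZMod 2) = 0 from rfl]

include hN hρN hρ htrans hsN hs in
theorem exists_coboundary_eq_of_cocycleParity_eq [Finite G] {c : cocycles₁ (Rep.of ρ)}
    {t : ZMod 2} (hct : cocycleParity s c = t • fun _ => 1) : ∃ x, coboundary ρ x = c := by
  obtain ⟨τ, hτ⟩ := exists_notMem_of_index_eq_two hN
  obtain ⟨x, hx⟩ := exists_eq_coboundary_on hρN c
  obtain ⟨a, ha⟩ := ZMod.intCast_surjective (t - (x.2.1 : ZMod 2))
  -- `(0, a, 0)` is `N`-invariant, so adding it to `x` fixes the parity without spoiling `hx`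
  set x' := x + ((0 : I → ℤ), a, 0)
  set c' := c - coboundary ρ x'
  have hc' : ∀ n ∈ N, c' n = 0 := by
    intro n hn
    change c n - coboundary ρ (x + ((0 : I → ℤ), a, 0)) n = 0
    rw [map_add]
    change c n - (coboundary ρ x n + coboundary ρ ((0 : I → ℤ), a, 0) n) = 0
    rw [hx n hn, sub_add_cancel_left, neg_eq_zero, coboundary_apply, map_of_mem hρN hn]
    ext <;> simp
  have hx' : (x'.2.1 : ZMod 2) = t := by simp [x', ha]
  have hpar : cocycleParity s c' = 0 := by
    rw [map_sub, hct, cocycleParity_coboundary hsN hs hρ, hx', sub_self]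
  set m := c' τ
  have hm := isSignInvariant_of_eq_zero_on hN hc' hτ
  have heven (y : I) : Even (m.1 y) := by
    have h := congrFun (cocycleParity_of_eq_zero_on hN hsN hc' hτ) (Quotient.mk'' y)
    rw [hpar, hm.fst_out hρN htrans] at h
    exact ZMod.intCast_eq_zero_iff_even.1 h.symm
  obtain ⟨x₀, hx₀⟩ := exists_coboundary_eq_signCocycle hρN htrans hm hρ heven
  have hcx₀ : coboundary ρ x₀ = c' := cocycles₁_ext fun g => by
    rw [congrFun hx₀ g, ← congrFun (coe_eq_signCocycle_of_eq_zero_on hN hc' hτ) g]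
  exact ⟨x' + x₀, by rw [map_add, hcx₀, add_sub_cancel]⟩

include hN hρN hρ hsN in
theorem exists_cocycleParity_eq {a : orbitRel.Quotient G I → ZMod 2}
    (ha : orbitSum G I a = 0) : ∃ c : cocycles₁ (Rep.of ρ), cocycleParity s c = a := by
  set w : I → ℤ := fun y => (a (Quotient.mk'' y)).val
  have hw (σ : G) (y : I) : w (σ • y) = w y := by simp only [w, mk_smul_eq]
  obtain ⟨k, hk⟩ : Even (∑ i, w i) := by
    rw [← ZMod.intCast_eq_zero_iff_even]
    simp only [w, Int.cast_sum, Int.cast_natCast, ZMod.natCast_zmod_val]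
    exact ha
  have hm := isSignInvariant_mk hρN hρ hw (d := -k) (by linarith)
  refine ⟨⟨signCocycle N (w, 0, -k), signCocycle_mem_cocycles₁ hN hm⟩, funext fun O => ?_⟩
  change (((signCocycle N (w, 0, -k) (s O)).1 O.out : ℤ) : ZMod 2) = a O
  simp [signCocycle, hsN O, w]

include hN hρN htrans hρ in
theorem nonempty_H1_addEquiv [Finite G] (hu : (fun _ => 1) ∈ LinearMap.ker (orbitSum G I)) :
    Nonempty (H1 (Rep.of ρ) ≃+ (LinearMap.ker (orbitSum G I) ⧸
      ZMod 2 ∙ (⟨fun _ => 1, hu⟩ : LinearMap.ker (orbitSum G I)))) := by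
  choose s hsN hs using fun O : orbitRel.Quotient G I => exists_notMem_smul_eq_self hN htrans O.out
  let Θ := (Submodule.mkQ (ZMod 2 ∙ (⟨fun _ => 1, hu⟩ : LinearMap.ker (orbitSum G I))))
    |>.toAddMonoidHom.comp <| (cocycleParity s).codRestrict (LinearMap.ker (orbitSum G I))
      (orbitSum_cocycleParity hN hρN htrans hsN hs hρ hu)
  refine nonempty_addEquiv_of_ker_eq (f := (H1π (Rep.of ρ)).hom.toAddMonoidHom) (g := Θ)
    ((ModuleCat.epi_iff_surjective _).1 inferInstance) ?_ fun c => ?_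
  · intro q
    obtain ⟨⟨a, ha⟩, rfl⟩ := Submodule.mkQ_surjective _ q
    obtain ⟨c, hc⟩ := exists_cocycleParity_eq hN hρN hsN hρ ha
    exact ⟨c, congrArg (Submodule.mkQ _) (Subtype.ext hc)⟩
  · change H1π (Rep.of ρ) c = 0 ↔ Submodule.Quotient.mk _ = 0
    rw [H1π_eq_zero_iff_exists_coboundary, Submodule.Quotient.mk_eq_zero,
      Submodule.mem_span_singleton]
    constructor
    · rintro ⟨x, rfl⟩
      exact ⟨x.2.1, Subtype.ext (cocycleParity_coboundary hsN hs hρ x).symm⟩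
    · rintro ⟨t, ht⟩
      exact exists_coboundary_eq_of_cocycleParity_eq hN hρN htrans hsN hs hρ
        (congrArg Subtype.val ht).symm

end Lattice

end IndexTwoLattice

open IndexTwoLattice

/-- First group cohomology of the lattice `M = ⟨e_i (i ∈ I), f, g⟩` with
`σ·e_i = e_{σi}`, `σ·f = f`, `σ·g = g` for `σ ∈ N`, and `σ·e_i = −e_{σi} + g`,
`σ·f = f − ∑ e_i + (r/2)g`, `σ·g = g` for `σ ∉ N`, where `|I| = r` is even and
`N` (of index 2) acts transitively on each `G`-orbit:
`H¹(G, M) ≅ (ℤ/2ℤ)^{r′−1}` if every orbit has even cardinality, and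
`H¹(G, M) ≅ (ℤ/2ℤ)^{r′−2}` if some orbit has odd cardinality
(`r′` = number of orbits). Here `M` is realised as `(I → ℤ) × ℤ × ℤ`, with `e_i`
the indicator of `i`, `f = (0, 1, 0)` and `g = (0, 0, 1)`. -/
theorem h1_even_case
    (G : Type) [Group G] [Fintype G] (N : Subgroup G) (hN : N.index = 2)
    (I : Type) [Fintype I] [MulAction G I]
    (r r' : ℕ) (hr : Fintype.card I = r) (heven : Even r)
    (hr' : Nat.card (MulAction.orbitRel.Quotient G I) = r')
    (htrans : ∀ i j : I, j ∈ MulAction.orbit G i → ∃ σ ∈ N, σ • i = j)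
    (ρ : Representation ℤ G ((I → ℤ) × ℤ × ℤ))
    (hρN : ∀ σ ∈ N, ∀ (v : I → ℤ) (c d : ℤ),
      ρ σ (v, c, d) = (fun j => v (σ⁻¹ • j), c, d))
    (hρ : ∀ σ ∉ N, ∀ (v : I → ℤ) (c d : ℤ),
      ρ σ (v, c, d) =
        (fun j => -v (σ⁻¹ • j) - c, c, (∑ i : I, v i) + c * ((r : ℤ) / 2) + d)) :
    ((∀ i : I, Even (Nat.card (MulAction.orbit G i))) →
        Nonempty (groupCohomology.H1 (Rep.of ρ) ≃+ (Fin (r' - 1) → ZMod 2))) ∧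
    ((∃ i : I, Odd (Nat.card (MulAction.orbit G i))) →
        Nonempty (groupCohomology.H1 (Rep.of ρ) ≃+ (Fin (r' - 2) → ZMod 2))) := by
  have hu : (fun _ => 1) ∈ LinearMap.ker (orbitSum G I) := by
    change ∑ _i : I, (1 : ZMod 2) = 0
    simp [hr, ZMod.natCast_eq_zero_iff_even.2 heven]
  obtain ⟨e⟩ := nonempty_H1_addEquiv hN hρN htrans hρ hu
  have key : Nonempty (H1 (Rep.of ρ) ≃+
      (Fin (Module.finrank (ZMod 2) (LinearMap.ker (orbitSum G I)) - 1) → ZMod 2)) := by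
    rw [← finrank_quotient_span_const hu]
    exact ⟨e.trans (Module.finBasis (ZMod 2) _).equivFun.toAddEquiv⟩
  refine ⟨fun hall => ?_, fun ⟨i, hi⟩ => ?_⟩
  · rwa [finrank_ker_orbitSum_of_even hall, hr'] at key
  · rwa [finrank_ker_orbitSum_of_odd hi, hr', Nat.sub_sub] at key
end

section
/- Let m, ν, ω be integers with m ≥ 1 and ω ≤ 0, and let m_1, …, m_n be finitely many integers with 0 ≤ m_j ≤ 2m for every j. Then it is impossible that both Σ_j m_j² = 4mν + ωm² and Σ_j m_j = 2ν + mω − 2 hold. (Numerical core of Theorem B: when the self-intersection of the canonical class ω = Ω·Ω satisfies ω ≤ 0, no G-invariant curve of positive degree m in u can satisfy the intersection conditions C·C = Σ m_j², Ω·C = −2 − Σ m_j required of the image of a line t = a.) -/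
open Finset

theorem Finset.sum_sq_le_mul_sum_of_nonneg_of_le {ι R : Type*} [Semiring R] [PartialOrder R]
    [IsOrderedRing R] (s : Finset ι) (f : ι → R) (c : R) (hf : ∀ i ∈ s, 0 ≤ f i ∧ f i ≤ c) :
    ∑ i ∈ s, f i ^ 2 ≤ c * ∑ i ∈ s, f i := by
  rw [mul_sum]
  refine sum_le_sum fun i hi => ?_
  rw [sq]
  exact mul_le_mul_of_nonneg_right (hf i hi).2 (hf i hi).1

/-- Numerical core of Theorem B: if `m ≥ 1`, `ω ≤ 0`, and `0 ≤ mⱼ ≤ 2m` for all `j`,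
then the equations `∑ mⱼ² = 4mν + ωm²` and `∑ mⱼ = 2ν + mω − 2` cannot both hold. -/
theorem theoremB_numerical_core (m ν ω : ℤ) (hm : 1 ≤ m) (hω : ω ≤ 0)
    (n : ℕ) (mj : Fin n → ℤ) (hmj : ∀ j, 0 ≤ mj j ∧ mj j ≤ 2 * m) :
    ¬ ((∑ j, (mj j) ^ 2 = 4 * m * ν + ω * m ^ 2) ∧
       (∑ j, mj j = 2 * ν + m * ω - 2)) := by
  rintro ⟨hsq, hsum⟩
  have hbound := sum_sq_le_mul_sum_of_nonneg_of_le univ mj (2 * m) fun j _ => hmj j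
  rw [hsq, hsum] at hbound
  have h4m : 4 * m ≤ ω * m ^ 2 := by linarith
  have hnonpos : ω * m ^ 2 ≤ 0 := mul_nonpos_of_nonpos_of_nonneg hω (sq_nonneg m)
  linarith
end
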